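/- arXiv:1904.03663 — 6 statements merged into one kernel-verified Lean document; each statement's English description precedes it below -/
import Mathlib

section
/- The tent map cascade is strongly mixing: for any two nonempty open subsets U, V of I = [0,1], the set {n ∈ ℕ : f^[n] '' U ∩ V ≠ ∅} is cofinite in ℕ (its complement in ℕ is finite). -/
/-!
A nonempty open `U ⊆ I` contains a dyadic interval `[k/2ⁿ, (k+1)/2ⁿ]`. One application of `f`
maps a dyadic interval of level `n + 1` onto one of level `n` (doubling it, and on the right half
also reflecting it about `1/2`), so `f^[n]` maps it onto `I`. As `f` is onto, `f^[m] '' U = I`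
for every `m ≥ n`, and then `f^[m] '' U` meets every nonempty `V`.
-/

open Set

/-- The tent map `f(x) = 1 - |1 - 2x|` on `I = [0,1]`. -/
noncomputable def tentMap (x : unitInterval) : unitInterval :=
  ⟨1 - |1 - 2 * (x : ℝ)|, by
    obtain ⟨h0, h1⟩ := x.2
    constructor
    · have h : |1 - 2 * (x : ℝ)| ≤ 1 := abs_le.mpr ⟨by linarith, by linarith⟩
      linarith
    · have h : (0 : ℝ) ≤ |1 - 2 * (x : ℝ)| := abs_nonneg _
      linarith⟩

noncomputable def tent (x : ℝ) : ℝ := 1 - |1 - 2 * x|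

lemma tent_of_le_half {x : ℝ} (h : x ≤ 1 / 2) : tent x = 2 * x := by
  rw [tent, abs_of_nonneg (by linarith)]; ring

lemma tent_of_half_le {x : ℝ} (h : 1 / 2 ≤ x) : tent x = 2 - 2 * x := by
  rw [tent, abs_of_nonpos (by linarith)]; ring

lemma tent_image_Icc_of_le_half {a b : ℝ} (hb : b ≤ 1 / 2) :
    tent '' Icc a b = Icc (2 * a) (2 * b) := by
  ext y; constructor
  · rintro ⟨x, hx, rfl⟩
    rw [tent_of_le_half (hx.2.trans hb)]
    exact ⟨by linarith [hx.1], by linarith [hx.2]⟩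
  · rintro ⟨h1, h2⟩
    exact ⟨y / 2, ⟨by linarith, by linarith⟩, by rw [tent_of_le_half (by linarith)]; ring⟩

lemma tent_image_Icc_of_half_le {a b : ℝ} (ha : 1 / 2 ≤ a) :
    tent '' Icc a b = Icc (2 - 2 * b) (2 - 2 * a) := by
  ext y; constructor
  · rintro ⟨x, hx, rfl⟩
    rw [tent_of_half_le (ha.trans hx.1)]
    exact ⟨by linarith [hx.2], by linarith [hx.1]⟩
  · rintro ⟨h1, h2⟩
    exact ⟨(2 - y) / 2, ⟨by linarith, by linarith⟩, by rw [tent_of_half_le (by linarith)]; ring⟩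

def dyadicInterval (n k : ℕ) : Set ℝ := Icc (k / 2 ^ n) ((k + 1) / 2 ^ n)

lemma dyadicInterval_subset_Icc {n k : ℕ} {a b : ℝ} (ha : a * 2 ^ n ≤ k)
    (hb : (k + 1 : ℝ) ≤ b * 2 ^ n) : dyadicInterval n k ⊆ Icc a b :=
  Icc_subset_Icc ((le_div_iff₀ (by positivity)).2 ha) ((div_le_iff₀ (by positivity)).2 hb)

lemma tent_image_dyadicInterval_succ {n k : ℕ} (hk : k < 2 ^ (n + 1)) :
    ∃ j < 2 ^ n, tent '' dyadicInterval (n + 1) k = dyadicInterval n j := by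
  have h2 : (2 : ℝ) ^ (n + 1) = 2 * 2 ^ n := pow_succ' 2 n
  rcases lt_or_ge k (2 ^ n) with hk' | hk'
  · refine ⟨k, hk', ?_⟩
    have hkR : (k + 1 : ℝ) ≤ 2 ^ n := by exact_mod_cast hk'
    rw [dyadicInterval, tent_image_Icc_of_le_half (by rw [h2]; field_simp; linarith),
      dyadicInterval, h2]
    congr 1 <;> field_simp
  · refine ⟨2 ^ (n + 1) - 1 - k, by omega, ?_⟩
    have hkR : (2 ^ n : ℝ) ≤ k := by exact_mod_cast hk'
    have hj : ((2 ^ (n + 1) - 1 - k : ℕ) : ℝ) = 2 * 2 ^ n - 1 - k := by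
      rw [Nat.cast_sub (by omega), Nat.cast_sub (Nat.one_le_two_pow), ← h2]; push_cast; ring
    rw [dyadicInterval, tent_image_Icc_of_half_le (by rw [h2]; field_simp; linarith),
      dyadicInterval, hj, h2]
    congr 1 <;> field_simp <;> ring

lemma tent_iterate_image_dyadicInterval {n k : ℕ} (hk : k < 2 ^ n) :
    tent^[n] '' dyadicInterval n k = Icc 0 1 := by
  induction n generalizing k with
  | zero =>
    obtain rfl : k = 0 := by omega
    simp [dyadicInterval]
  | succ n ih =>
    obtain ⟨j, hj, himage⟩ := tent_image_dyadicInterval_succ hk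
    rw [Function.iterate_succ, image_comp, himage, ih hj]

lemma exists_dyadicInterval_subset_Icc {a b : ℝ} (ha : 0 ≤ a) (hab : a < b) (hb : b ≤ 1) :
    ∃ n, ∃ k < 2 ^ n, dyadicInterval n k ⊆ Icc a b := by
  obtain ⟨n, hn⟩ := pow_unbounded_of_one_lt (2 / (b - a)) one_lt_two
  have hlen : 2 < (b - a) * 2 ^ n := (div_lt_iff₀' (by linarith)).1 hn
  have hceil : (⌈a * 2 ^ n⌉₊ : ℝ) < a * 2 ^ n + 1 := Nat.ceil_lt_add_one (by positivity)
  have hright : (⌈a * 2 ^ n⌉₊ + 1 : ℝ) ≤ b * 2 ^ n := by nlinarith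
  refine ⟨n, ⌈a * 2 ^ n⌉₊, ?_, dyadicInterval_subset_Icc (Nat.le_ceil _) hright⟩
  have : (⌈a * 2 ^ n⌉₊ : ℝ) < 2 ^ n := by nlinarith
  exact_mod_cast this

lemma tentMap_surjective : Function.Surjective tentMap := fun y =>
  ⟨⟨y / 2, by constructor <;> linarith [y.2.1, y.2.2]⟩,
    Subtype.ext (tent_of_le_half (by linarith [y.2.2]) |>.trans (by ring))⟩

lemma semiconj_val_tentMap_tent : Function.Semiconj Subtype.val tentMap tent := fun _ => rfl

lemma exists_tentMap_iterate_image_eq_univ {U : Set unitInterval} (hU : IsOpen U)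
    (hne : U.Nonempty) : ∃ n, tentMap^[n] '' U = univ := by
  obtain ⟨x, hx⟩ := hne
  obtain ⟨ε, hε, hball⟩ := Metric.isOpen_iff.mp hU x hx
  have hx0 : (0 : ℝ) ≤ x := x.2.1
  have hx1 : (x : ℝ) ≤ 1 := x.2.2
  obtain ⟨n, k, hk, hsub⟩ := exists_dyadicInterval_subset_Icc (le_max_left 0 (x - ε / 2))
    (max_lt (lt_min zero_lt_one (by linarith)) (lt_min (by linarith) (by linarith)))
    (min_le_left 1 (x + ε / 2))
  have hcoeU : Icc (max 0 (x - ε / 2)) (min 1 (x + ε / 2)) ⊆ (↑) '' U := by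
    intro y ⟨hy0, hy1⟩
    have hyI : y ∈ unitInterval := ⟨le_of_max_le_left hy0, le_of_le_min_left hy1⟩
    refine ⟨⟨y, hyI⟩, hball ?_, rfl⟩
    rw [Metric.mem_ball, Subtype.dist_eq, Real.dist_eq, abs_lt]
    constructor <;> linarith [le_of_max_le_right hy0, le_of_le_min_right hy1]
  refine ⟨n, eq_univ_of_univ_subset ?_⟩
  rw [← image_subset_image_iff Subtype.val_injective, image_univ, Subtype.range_coe,
    ← image_comp, (semiconj_val_tentMap_tent.iterate_right n).comp_eq, image_comp]
  change Icc 0 1 ⊆ _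
  rw [← tent_iterate_image_dyadicInterval hk]
  exact image_mono (hsub.trans hcoeU)

theorem stmt6_general (U V : Set unitInterval) (hUo : IsOpen U) (hUne : U.Nonempty)
    (hVne : V.Nonempty) :
    ({n : ℕ | ((tentMap^[n] '' U) ∩ V).Nonempty}ᶜ).Finite := by
  obtain ⟨N, hN⟩ := exists_tentMap_iterate_image_eq_univ hUo hUne
  refine (finite_Iio N).subset fun n hn => ?_
  by_contra hlt
  apply hn
  change (tentMap^[n] '' U ∩ V).Nonempty
  rw [← Nat.sub_add_cancel (not_lt.1 hlt), Function.iterate_add, image_comp, hN,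
    image_univ, (tentMap_surjective.iterate _).range_eq, univ_inter]
  exact hVne

/-- The tent map cascade on `I = [0,1]` is strongly mixing: for all nonempty open
`U, V ⊆ I`, the set `{n : ℕ | f^[n] '' U ∩ V ≠ ∅}` is cofinite in `ℕ`. -/
theorem stmt6 (U V : Set unitInterval) (hUo : IsOpen U) (hUne : U.Nonempty)
    (hVo : IsOpen V) (hVne : V.Nonempty) :
    ({n : ℕ | ((tentMap^[n] '' U) ∩ V).Nonempty}ᶜ).Finite :=
  stmt6_general U V hUo hUne hVne
end

section
/- The semi-flow (G, I, π) is not thickly sensitive: there is no ε > 0 such that for every nonempty open subset U of I the set D(U, ε) = {g ∈ G : diam(gU) > ε} is a thick subset of G. In fact, for every ε > 0, taking U = I, the set D(I, ε) ⊆ G \ {∞} is not thick. -/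
open Set Pointwise

/-- `B ⊆ G = ℕ∞` is syndetic: there is a finite `K` with `(t + K) ∩ B ≠ ∅` for all `t`. -/
def Syndetic (B : Set (WithTop ℕ)) : Prop :=
  ∃ K : Set (WithTop ℕ), K.Finite ∧ ∀ t : WithTop ℕ, (((t + ·) '' K) ∩ B).Nonempty

/-- `B ⊆ G = ℕ∞` is thick: for every finite `K` there is `t` with `t + K ⊆ B`. -/
def Thick (B : Set (WithTop ℕ)) : Prop :=
  ∀ K : Set (WithTop ℕ), K.Finite → ∃ t : WithTop ℕ, ((t + ·) '' K) ⊆ B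

/-- `B` is thickly syndetic: for every finite `K` there is a syndetic `S` with `S + K ⊆ B`. -/
def ThicklySyndetic (B : Set (WithTop ℕ)) : Prop :=
  ∀ K : Set (WithTop ℕ), K.Finite → ∃ S : Set (WithTop ℕ), Syndetic S ∧ S + K ⊆ B

/-- `B` is periodic: there are a syndetic additive submonoid `S` and `t` with `t + S ⊆ B`. -/
def Periodic (B : Set (WithTop ℕ)) : Prop :=
  ∃ S : AddSubmonoid (WithTop ℕ), Syndetic (S : Set (WithTop ℕ)) ∧
    ∃ t : WithTop ℕ, ((t + ·) '' (S : Set (WithTop ℕ))) ⊆ B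

/-- `B` is thickly periodic: for every finite `K` there is a periodic `P` with `P + K ⊆ B`. -/
def ThicklyPeriodic (B : Set (WithTop ℕ)) : Prop :=
  ∀ K : Set (WithTop ℕ), K.Finite → ∃ P : Set (WithTop ℕ), Periodic P ∧ P + K ⊆ B

/-- The action `π : ℕ∞ × I → I`, with `π(n, x) = f^[n](x)` for `n ∈ ℕ` and `π(∞, x) = 0`. -/
noncomputable def piAct : WithTop ℕ → unitInterval → unitInterval := fun g x =>
  WithTop.recTopCoe 0 (fun n => tentMap^[n] x) g

/-- The semi-flow `(ℕ∞, I, π)` is not thickly sensitive: no `ε > 0` makes every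
`D(U, ε)` thick; in fact for every `ε > 0`, taking `U = I`, the set
`D(I, ε) ⊆ G \ {∞}` is not thick. -/
theorem stmt10 :
    (¬ ∃ ε : ℝ, 0 < ε ∧ ∀ U : Set unitInterval, IsOpen U → U.Nonempty →
      Thick {g : WithTop ℕ | ε < Metric.diam (piAct g '' U)}) ∧
    (∀ ε : ℝ, 0 < ε →
      {g : WithTop ℕ | ε < Metric.diam (piAct g '' (univ : Set unitInterval))}
        ⊆ {(⊤ : WithTop ℕ)}ᶜ ∧
      ¬ Thick {g : WithTop ℕ | ε < Metric.diam (piAct g '' (univ : Set unitInterval))}) := by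
  have key : ∀ (ε : ℝ) (U : Set unitInterval), 0 < ε →
      (⊤ : WithTop ℕ) ∉ {g : WithTop ℕ | ε < Metric.diam (piAct g '' U)} := by
    intro ε U hε h
    have himg : piAct (⊤ : WithTop ℕ) '' U ⊆ {0} := by
      rintro _ ⟨x, -, rfl⟩
      simp [piAct]
    have : Metric.diam (piAct (⊤ : WithTop ℕ) '' U) ≤ Metric.diam ({0} : Set unitInterval) :=
      Metric.diam_mono himg (Bornology.isBounded_singleton)
    rw [Metric.diam_singleton] at this
    exact absurd (lt_of_lt_of_le (lt_trans hε h) this) (lt_irrefl 0)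
  have notthick : ∀ (ε : ℝ) (U : Set unitInterval), 0 < ε →
      ¬ Thick {g : WithTop ℕ | ε < Metric.diam (piAct g '' U)} := by
    intro ε U hε hT
    obtain ⟨t, ht⟩ := hT {⊤} (Set.finite_singleton _)
    have : t + (⊤ : WithTop ℕ) ∈ {g : WithTop ℕ | ε < Metric.diam (piAct g '' U)} :=
      ht ⟨⊤, rfl, rfl⟩
    rw [add_top] at this
    exact key ε U hε this
  constructor
  · rintro ⟨ε, hε, h⟩
    exact notthick ε univ hε (h univ isOpen_univ ⟨0, trivial⟩)
  · intro ε hε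
    exact ⟨fun g hg hgtop => key ε univ hε (hgtop ▸ hg), notthick ε univ hε⟩
end

section
/- The semi-flow (G, I, π) is not syndetically sensitive: there is no ε > 0 such that for every nonempty open subset U of I the set D(U, ε) = {g ∈ G : diam(gU) > ε} is a syndetic subset of G. In fact, for every ε > 0, taking U = I, the set D(I, ε) ⊆ G \ {∞} is not syndetic. -/
open Set Pointwise

/-- The semi-flow `(ℕ∞, I, π)` is not syndetically sensitive: no `ε > 0` makes every
`D(U, ε)` syndetic; in fact for every `ε > 0`, taking `U = I`, the set
`D(I, ε) ⊆ G \ {∞}` is not syndetic. -/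
theorem stmt11 :
    (¬ ∃ ε : ℝ, 0 < ε ∧ ∀ U : Set unitInterval, IsOpen U → U.Nonempty →
      Syndetic {g : WithTop ℕ | ε < Metric.diam (piAct g '' U)}) ∧
    (∀ ε : ℝ, 0 < ε →
      {g : WithTop ℕ | ε < Metric.diam (piAct g '' (univ : Set unitInterval))}
        ⊆ {(⊤ : WithTop ℕ)}ᶜ ∧
      ¬ Syndetic {g : WithTop ℕ | ε < Metric.diam (piAct g '' (univ : Set unitInterval))}) := by
  have key : ∀ ε : ℝ, 0 < ε →
      {g : WithTop ℕ | ε < Metric.diam (piAct g '' (univ : Set unitInterval))}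
        ⊆ {(⊤ : WithTop ℕ)}ᶜ ∧
      ¬ Syndetic {g : WithTop ℕ | ε < Metric.diam (piAct g '' (univ : Set unitInterval))} := by
    intro ε hε
    have hsub : {g : WithTop ℕ | ε < Metric.diam (piAct g '' (univ : Set unitInterval))}
        ⊆ {(⊤ : WithTop ℕ)}ᶜ := by
      intro g hg
      simp only [mem_compl_iff, mem_singleton_iff]
      rintro rfl
      have himg : piAct (⊤ : WithTop ℕ) '' (univ : Set unitInterval) = {0} := by
        ext y
        simp only [image_univ, mem_range, mem_singleton_iff, piAct, WithTop.recTopCoe]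
        constructor
        · rintro ⟨x, rfl⟩; rfl
        · rintro rfl; exact ⟨0, rfl⟩
      rw [mem_setOf_eq, himg, Metric.diam_singleton] at hg
      linarith
    refine ⟨hsub, ?_⟩
    rintro ⟨K, hKfin, hK⟩
    obtain ⟨b, hb, hbB⟩ := hK ⊤
    obtain ⟨k, -, hk⟩ := hb
    have : b = ⊤ := by rw [← hk]; exact top_add k
    exact hsub hbB (this ▸ rfl)
  refine ⟨?_, key⟩
  rintro ⟨ε, hε, hall⟩
  exact (key ε hε).2 (hall univ isOpen_univ ⟨0, trivial⟩)
end

section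
/- The semi-flow (G, I, π) is not thickly syndetically sensitive: there is no ε > 0 such that for every nonempty open subset U of I the set D(U, ε) = {g ∈ G : diam(gU) > ε} is a thickly syndetic subset of G. -/
open Set Pointwise

/-- The semi-flow `(ℕ∞, I, π)` is not thickly syndetically sensitive: there is no
`ε > 0` such that `D(U, ε) = {g : diam (g U) > ε}` is thickly syndetic for every
nonempty open `U ⊆ I`. -/
theorem stmt12 :
    ¬ ∃ ε : ℝ, 0 < ε ∧ ∀ U : Set unitInterval, IsOpen U → U.Nonempty →
      ThicklySyndetic {g : WithTop ℕ | ε < Metric.diam (piAct g '' U)} := by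
  rintro ⟨ε, hε, h⟩
  have hU := h Set.univ isOpen_univ ⟨0, trivial⟩
  obtain ⟨S, ⟨K, hKfin, hK⟩, hSK⟩ := hU {⊤} (Set.finite_singleton _)
  obtain ⟨s, _, hsS⟩ := hK 0
  have hmem : (⊤ : WithTop ℕ) ∈ {g : WithTop ℕ | ε < Metric.diam (piAct g '' Set.univ)} := by
    have : s + ⊤ ∈ S + {⊤} := Set.add_mem_add hsS rfl
    simpa [add_top] using hSK this
  have himg : piAct (⊤ : WithTop ℕ) '' Set.univ = {0} := by
    ext x
    simp [piAct, eq_comm]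
  rw [Set.mem_setOf_eq, himg, Metric.diam_singleton] at hmem
  linarith
end

section
/- The semi-flow (G, I, π) is not thickly periodically sensitive: there is no ε > 0 such that for every nonempty open subset U of I the set D(U, ε) = {g ∈ G : diam(gU) > ε} is a thickly periodic subset of G. -/
open Set Pointwise

/-- The semi-flow `(ℕ∞, I, π)` is not thickly periodically sensitive: there is no
`ε > 0` such that `D(U, ε) = {g : diam (g U) > ε}` is thickly periodic for every
nonempty open `U ⊆ I`. -/
theorem stmt13 :
    ¬ ∃ ε : ℝ, 0 < ε ∧ ∀ U : Set unitInterval, IsOpen U → U.Nonempty →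
      ThicklyPeriodic {g : WithTop ℕ | ε < Metric.diam (piAct g '' U)} := by
  rintro ⟨ε, hε, h⟩
  have hTP := h Set.univ isOpen_univ ⟨0, trivial⟩
  obtain ⟨P, ⟨S, hS, t, htS⟩, hPK⟩ := hTP {⊤} (Set.finite_singleton _)
  have htP : t ∈ P := htS ⟨0, S.zero_mem, by simp⟩
  have hmem : (⊤ : WithTop ℕ) ∈ {g : WithTop ℕ | ε < Metric.diam (piAct g '' Set.univ)} := by
    have : t + ⊤ ∈ P + {⊤} := Set.add_mem_add htP rfl
    simpa using hPK this
  have hsub : piAct ⊤ '' Set.univ ⊆ {(0 : unitInterval)} := by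
    rintro _ ⟨x, -, rfl⟩
    rfl
  have hd : Metric.diam (piAct ⊤ '' Set.univ) = 0 :=
    Metric.diam_subsingleton fun a ha b hb => (hsub ha).trans (hsub hb).symm
  exact absurd hmem (by simp only [Set.mem_setOf_eq, not_lt]; linarith)
end

section
/- The set G₁ = {0, ∞} is a syndetic additive submonoid of G = ℕ∞ (and closed, since G is discrete), and the restricted semi-flow (G₁, I, π) is not sensitive: for every ε > 0 there exists a nonempty open subset U of I such that diam(gU) ≤ ε for every g ∈ G₁. -/
open Set Pointwise

/-- `G₁ = {0, ∞}` is a syndetic additive submonoid of `G = ℕ∞`, closed for the discrete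
topology `⊥` on `G`, and the restricted semi-flow `(G₁, I, π)` is not sensitive: for every
`ε > 0` there is a nonempty open `U ⊆ I` with `diam (g U) ≤ ε` for all `g ∈ G₁`. -/
theorem stmt14 :
    ∃ S : AddSubmonoid (WithTop ℕ),
      (S : Set (WithTop ℕ)) = {0, ⊤} ∧
      Syndetic (S : Set (WithTop ℕ)) ∧
      @IsClosed (WithTop ℕ) ⊥ (S : Set (WithTop ℕ)) ∧
      ∀ ε : ℝ, 0 < ε → ∃ U : Set unitInterval, IsOpen U ∧ U.Nonempty ∧
        ∀ g ∈ ({0, ⊤} : Set (WithTop ℕ)), Metric.diam (piAct g '' U) ≤ ε := by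
  refine ⟨⟨⟨{0, ⊤}, ?_⟩, ?_⟩, rfl, ?_, ?_, ?_⟩
  · rintro a b (rfl | rfl) (rfl | rfl) <;> simp
  · simp
  · refine ⟨{⊤}, Set.finite_singleton _, fun t => ⟨⊤, ⟨⊤, rfl, by simp⟩, by simp⟩⟩
  · letI t : TopologicalSpace (WithTop ℕ) := ⊥
    haveI : DiscreteTopology (WithTop ℕ) := ⟨rfl⟩
    exact isClosed_discrete _
  · intro ε hε
    refine ⟨{x | (x : ℝ) < min (ε/2) 1}, ?_, ⟨0, by simp; positivity⟩, ?_⟩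
    · exact isOpen_lt continuous_subtype_val continuous_const
    · rintro g (rfl | rfl)
      · apply Metric.diam_le_of_forall_dist_le hε.le
        rintro x ⟨a, ha, rfl⟩ y ⟨b, hb, rfl⟩
        have h1 : piAct 0 a = a := rfl
        have h2 : piAct 0 b = b := rfl
        rw [h1, h2]
        have ha' : (a : ℝ) < ε/2 := lt_of_lt_of_le ha (min_le_left _ _)
        have hb' : (b : ℝ) < ε/2 := lt_of_lt_of_le hb (min_le_left _ _)
        have ha0 := a.2.1
        have hb0 := b.2.1
        rw [Subtype.dist_eq, Real.dist_eq, abs_le]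
        constructor <;> linarith
      · apply Metric.diam_le_of_forall_dist_le hε.le
        rintro x ⟨a, _, rfl⟩ y ⟨b, _, rfl⟩
        have h1 : piAct ⊤ a = 0 := rfl
        have h2 : piAct ⊤ b = 0 := rfl
        rw [h1, h2, dist_self]
        exact hε.le
end
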